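/- arXiv:math/0507357 — 3 statements merged into one kernel-verified Lean document; each statement's English description precedes it below -/
import Mathlib

section
/- Let G be a finite nonabelian p-group whose commutator subgroup G' has order p. If C_g and C_h are conjugacy classes of G each containing at least two elements, then the product of their class sums in 𝔽_p G is zero: Ĉ_g · Ĉ_h = 0. -/
/-!
Every conjugate of `a` has the form `a[a⁻¹, c]`, so the class of `a` lies in the coset `aG'`, which
has `p` elements. Class sizes in a `p`-group are powers of `p`, so a class with at least two
elements fills the whole coset and its class sum is `a · Ĝ'`, where `Ĝ'` is the sum over `G'`.
As `G'` is normal, `Ĝ'` is central, and `Ĝ' · Ĝ' = |G'| · Ĝ' = 0` in characteristic `p`.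
-/

open MonoidAlgebra
open scoped commutatorElement

/-- The class sum of the conjugacy class of `g` in `𝔽_p G`. -/
noncomputable def classSum (p : ℕ) [Fact p.Prime] (G : Type*) [Group G] [Fintype G]
    [DecidableEq G] (g : G) : MonoidAlgebra (ZMod p) G :=
  ∑ h ∈ Finset.univ.filter (fun h => IsConj g h), MonoidAlgebra.of (ZMod p) G h

section SubgroupSum

variable (k : Type*) {G : Type*} [Semiring k] [Group G] (N : Subgroup G) [Fintype N]

noncomputable def subgroupSum : MonoidAlgebra k G :=
  ∑ n : N, of k G n

variable {N}

theorem of_mul_subgroupSum {n : G} (hn : n ∈ N) :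
    of k G n * subgroupSum k N = subgroupSum k N := by
  rw [subgroupSum, Finset.mul_sum]
  exact Fintype.sum_equiv (Equiv.mulLeft ⟨n, hn⟩) _ _ fun m => (map_mul _ _ _).symm

variable (N)

theorem subgroupSum_mul_self :
    subgroupSum k N * subgroupSum k N = Fintype.card N • subgroupSum k N := by
  calc subgroupSum k N * subgroupSum k N = ∑ m : N, of k G m * subgroupSum k N :=
        Finset.sum_mul _ _ _
    _ = ∑ _m : N, subgroupSum k N := Finset.sum_congr rfl fun m _ => of_mul_subgroupSum k m.2
    _ = Fintype.card N • subgroupSum k N := by rw [Finset.sum_const, Finset.card_univ]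

theorem commute_of_subgroupSum [N.Normal] (g : G) :
    Commute (of k G g) (subgroupSum k N) := by
  rw [Commute, SemiconjBy, subgroupSum, Finset.mul_sum, Finset.sum_mul]
  refine Fintype.sum_equiv (MulAut.conjNormal g).toEquiv _ _ fun m => ?_
  simp only [MulEquiv.toEquiv_eq_coe, MulEquiv.coe_toEquiv, MulAut.conjNormal_apply, ← map_mul,
    inv_mul_cancel_right]

end SubgroupSum

theorem mem_commutator_of_isConj {G : Type*} [Group G] {a b : G} (hab : IsConj a b) :
    a⁻¹ * b ∈ commutator G := by
  obtain ⟨c, rfl⟩ := isConj_iff.mp hab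
  have : a⁻¹ * (c * a * c⁻¹) = ⁅a⁻¹, c⁆ := by group
  rw [this]
  exact Subgroup.commutator_mem_commutator (Subgroup.mem_top _) (Subgroup.mem_top _)

theorem IsPGroup.exists_card_filter_isConj_eq_pow {p : ℕ} {G : Type*} [Group G] [Fintype G]
    [DecidableEq G] [Fact p.Prime] (hG : IsPGroup p G) (a : G) :
    ∃ n, (Finset.univ.filter (IsConj a)).card = p ^ n := by
  rw [← Fintype.card_subtype, ← Nat.card_eq_fintype_card]
  obtain ⟨n, hn⟩ := (hG.of_equiv ConjAct.toConjAct).card_orbit a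
  refine ⟨n, hn ▸ Nat.card_congr (Equiv.subtypeEquivRight fun x => ?_)⟩
  rw [ConjAct.mem_orbit_conjAct, isConj_comm]

section CommutatorOfOrderP

variable {p : ℕ} [Fact p.Prime] {G : Type*} [Group G] [Fintype G] [DecidableEq G]
  [Fintype (commutator G)]

theorem filter_isConj_eq_image_mul_commutator (hG : IsPGroup p G)
    (hG' : Nat.card (commutator G) = p) {a : G} (ha : 2 ≤ (Finset.univ.filter (IsConj a)).card) :
    Finset.univ.filter (IsConj a) = Finset.univ.image (fun z : commutator G => a * z) := by
  have hsub : Finset.univ.filter (IsConj a) ⊆ Finset.univ.image (fun z : commutator G => a * z) :=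
    fun x hx => Finset.mem_image.mpr
      ⟨⟨a⁻¹ * x, mem_commutator_of_isConj (Finset.mem_filter.mp hx).2⟩, Finset.mem_univ _,
        mul_inv_cancel_left a x⟩
  refine Finset.eq_of_subset_of_card_le hsub ?_
  obtain ⟨n, hn⟩ := hG.exists_card_filter_isConj_eq_pow a
  have hn0 : n ≠ 0 := by
    rintro rfl
    rw [hn, pow_zero] at ha
    omega
  calc (Finset.univ.image (fun z : commutator G => a * z)).card
      ≤ Fintype.card (commutator G) := Finset.card_image_le
    _ = p := by rw [← Nat.card_eq_fintype_card, hG']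
    _ ≤ p ^ n := Nat.le_self_pow hn0 p
    _ = (Finset.univ.filter (IsConj a)).card := hn.symm

theorem classSum_eq_of_mul_subgroupSum (hG : IsPGroup p G)
    (hG' : Nat.card (commutator G) = p) {a : G} (ha : 2 ≤ (Finset.univ.filter (IsConj a)).card) :
    classSum p G a = of (ZMod p) G a * subgroupSum (ZMod p) (commutator G) := by
  rw [classSum, filter_isConj_eq_image_mul_commutator hG hG' ha,
    Finset.sum_image fun z _ w _ hzw => Subtype.ext (mul_left_cancel hzw), subgroupSum,
    Finset.mul_sum]
  simp only [map_mul]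

end CommutatorOfOrderP

theorem classSum_mul_classSum_eq_zero_general (p : ℕ) [Fact p.Prime] (G : Type*) [Group G]
    [Fintype G] [DecidableEq G] (hG : IsPGroup p G)
    (hG' : Nat.card (commutator G) = p) (g h : G)
    (hg : 2 ≤ (Finset.univ.filter (fun x => IsConj g x)).card)
    (hh : 2 ≤ (Finset.univ.filter (fun x => IsConj h x)).card) :
    classSum p G g * classSum p G h = 0 := by
  classical
  set K := subgroupSum (ZMod p) (commutator G)
  have hKK : K * K = 0 := by
    rw [subgroupSum_mul_self, ← Nat.cast_smul_eq_nsmul (ZMod p), ← Nat.card_eq_fintype_card, hG',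
      ZMod.natCast_self, zero_smul]
  calc classSum p G g * classSum p G h = of (ZMod p) G g * K * (of (ZMod p) G h * K) := by
        rw [classSum_eq_of_mul_subgroupSum hG hG' hg,
          classSum_eq_of_mul_subgroupSum hG hG' hh]
    _ = of (ZMod p) G g * of (ZMod p) G h * (K * K) := by
        rw [mul_assoc, (commute_of_subgroupSum (ZMod p) (commutator G) h).symm.left_comm,
          ← mul_assoc]
    _ = 0 := by rw [hKK, mul_zero]

/-- If `G` is a finite nonabelian `p`-group with `|G'| = p`, then the product of the
class sums of any two conjugacy classes having at least two elements is zero. -/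
theorem classSum_mul_classSum_eq_zero (p : ℕ) [Fact p.Prime] (G : Type*) [Group G]
    [Fintype G] [DecidableEq G] (hG : IsPGroup p G)
    (hna : ¬ ∀ a b : G, a * b = b * a)
    (hG' : Nat.card (commutator G) = p) (g h : G)
    (hg : 2 ≤ (Finset.univ.filter (fun x => IsConj g x)).card)
    (hh : 2 ≤ (Finset.univ.filter (fun x => IsConj h x)).card) :
    classSum p G g * classSum p G h = 0 :=
  classSum_mul_classSum_eq_zero_general p G hG hG' g h hg hh
end

section
/- Let H be a group generated by a and b with commutator subgroup H' central of order p, p prime. If h ∈ H is not central and c_1,…,c_k ∈ {a,b} with 1 ≤ k ≤ p−1, and the product c_1⋯c_p (with c_i ∈ {a,b}) lies in the coset a^r b^{p−r} H' for some 1 ≤ r ≤ p−1, then any cyclic rotation c_{k+1}⋯c_p c_1⋯c_k of the product is distinct from c_1⋯c_p. -/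
/-!
Rotating a word `w = X * Y` by `k` letters gives `Y * X = X⁻¹ * w * X`, where `X` is the product
of the first `k` letters, so the rotation equals `w` exactly when `X` commutes with `w`.
As commutators are central, `⁅·, ·⁆` is multiplicative in each argument, and for
`w ∈ a ^ r * b ^ (p - r) * H'` this gives `⁅a, w⁆ = ⁅a, b⁆ ^ (p - r) = ⁅a, b⁆⁻¹ ^ r = ⁅b, w⁆`.
Hence `⁅X, w⁆ = ⁅a, b⁆⁻¹ ^ (r * k)`. Since `H = ⟨a, b⟩` is not abelian, `⁅a, b⁆` has order `p`,
so this is trivial only if `p ∣ r * k`, which is impossible for `1 ≤ r, k ≤ p - 1`.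
-/

open scoped commutatorElement

theorem List.commute_prod_take_of_prod_rotate_eq {M : Type*} [Monoid M] {l : List M} {k : ℕ}
    (hk : k ≤ l.length) (h : (l.rotate k).prod = l.prod) : Commute (l.take k).prod l.prod := by
  have hsplit : l.prod = (l.take k).prod * (l.drop k).prod := by
    rw [← List.prod_append, List.take_append_drop]
  rw [List.rotate_eq_drop_append_take hk, List.prod_append, hsplit] at h
  rw [hsplit]
  exact (Commute.refl _).mul_right h.symm

section CommutatorElement

variable {G : Type*} [Group G]

theorem commutatorElement_mem_commutator (g h : G) : ⁅g, h⁆ ∈ commutator G := by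
  rw [commutator_def]
  exact Subgroup.commutator_mem_commutator (Subgroup.mem_top g) (Subgroup.mem_top h)

theorem commutatorElement_ne_one_of_closure_pair_eq_top {a b : G}
    (hgen : Subgroup.closure {a, b} = ⊤) (hG : commutator G ≠ ⊥) : ⁅a, b⁆ ≠ 1 := by
  intro hab
  rw [commutatorElement_eq_one_iff_mul_comm] at hab
  apply hG
  rw [commutator_def, ← hgen, Subgroup.commutator_self_eq_bot_iff]
  apply Subgroup.isMulCommutative_closure
  rintro x (rfl | rfl) y (rfl | rfl) <;> first | rfl | exact hab | exact hab.symm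

theorem orderOf_commutatorElement_of_closure_pair_eq_top {a b : G} {p : ℕ} (hp : p.Prime)
    (hgen : Subgroup.closure {a, b} = ⊤) (hcard : Nat.card (commutator G) = p) :
    orderOf ⁅a, b⁆ = p := by
  have hne : ⁅a, b⁆ ≠ 1 := by
    refine commutatorElement_ne_one_of_closure_pair_eq_top hgen fun hbot => hp.one_lt.ne' ?_
    rw [← hcard, hbot, Subgroup.card_bot]
  have hdvd : orderOf ⁅a, b⁆ ∣ p :=
    hcard ▸ Subgroup.orderOf_dvd_natCard _ (commutatorElement_mem_commutator a b)
  exact (hp.eq_one_or_self_of_dvd _ hdvd).resolve_left (orderOf_eq_one_iff.not.mpr hne)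

theorem commute_commutatorElement (hG : commutator G ≤ Subgroup.center G) (g h x : G) :
    Commute x ⁅g, h⁆ :=
  Subgroup.mem_center_iff.mp (hG (commutatorElement_mem_commutator g h)) x

theorem commutatorElement_mul_left_of_le_center (hG : commutator G ≤ Subgroup.center G)
    (g₁ g₂ h : G) : ⁅g₁ * g₂, h⁆ = ⁅g₁, h⁆ * ⁅g₂, h⁆ := by
  rw [commutatorElement_mul_left_eq_conj_mul, (commute_commutatorElement hG g₂ h g₁).eq,
    mul_inv_cancel_right, (commute_commutatorElement hG g₁ h _).eq]

theorem commutatorElement_mul_right_of_le_center (hG : commutator G ≤ Subgroup.center G)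
    (g h₁ h₂ : G) : ⁅g, h₁ * h₂⁆ = ⁅g, h₁⁆ * ⁅g, h₂⁆ := by
  rw [commutatorElement_mul_right_eq_mul_conj, mul_assoc _ h₁,
    (commute_commutatorElement hG g h₂ h₁).eq, ← mul_assoc, mul_inv_cancel_right]

theorem commutatorElement_pow_right_of_le_center (hG : commutator G ≤ Subgroup.center G)
    (g h : G) (n : ℕ) : ⁅g, h ^ n⁆ = ⁅g, h⁆ ^ n := by
  induction n with
  | zero => simp
  | succ n ih => rw [pow_succ, commutatorElement_mul_right_of_le_center hG, ih, pow_succ]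

theorem commutatorElement_list_prod_left_of_forall_eq (hG : commutator G ≤ Subgroup.center G)
    {l : List G} {h y : G} (hl : ∀ x ∈ l, ⁅x, h⁆ = y) : ⁅l.prod, h⁆ = y ^ l.length := by
  induction l with
  | nil => simp
  | cons x l ih =>
    rw [List.prod_cons, commutatorElement_mul_left_of_le_center hG, hl x List.mem_cons_self,
      ih fun x hx => hl x (List.mem_cons_of_mem _ hx), List.length_cons, pow_succ']

theorem commutatorElement_pow_mul_pow_mul_of_mem_center (hG : commutator G ≤ Subgroup.center G)
    (g a b : G) (m n : ℕ) {y : G} (hy : y ∈ Subgroup.center G) :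
    ⁅g, a ^ m * b ^ n * y⁆ = ⁅g, a⁆ ^ m * ⁅g, b⁆ ^ n := by
  rw [commutatorElement_mul_right_of_le_center hG, commutatorElement_mul_right_of_le_center hG,
    commutatorElement_pow_right_of_le_center hG, commutatorElement_pow_right_of_le_center hG,
    commutatorElement_eq_one_iff_commute.mpr (Subgroup.mem_center_iff.mp hy g), mul_one]

theorem commutatorElement_pow_mul_pow_sub_mul_of_eq_or_eq
    (hG : commutator G ≤ Subgroup.center G) {a b x y : G} {p r : ℕ} (hp : ⁅a, b⁆ ^ p = 1)
    (hr : r ≤ p) (hy : y ∈ Subgroup.center G) (hx : x = a ∨ x = b) :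
    ⁅x, a ^ r * b ^ (p - r) * y⁆ = ⁅a, b⁆⁻¹ ^ r := by
  rcases hx with rfl | rfl <;>
    rw [commutatorElement_pow_mul_pow_mul_of_mem_center hG _ _ _ _ _ hy, commutatorElement_self,
      one_pow]
  · rw [one_mul, pow_sub _ hr, hp, one_mul, inv_pow]
  · rw [mul_one, commutatorElement_inv]

end CommutatorElement

/-- In a group `H = ⟨a,b⟩` with central commutator subgroup of prime order `p`, a
product `c₁⋯c_p` of letters `cᵢ ∈ {a,b}` lying in a coset `a^r b^{p-r} H'` with
`1 ≤ r ≤ p-1` differs from each of its proper cyclic rotations. -/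
theorem rotation_ne_of_mixed_coset (H : Type*) [Group H] (p : ℕ) (hp : p.Prime)
    (a b : H) (hgen : Subgroup.closure ({a, b} : Set H) = ⊤)
    (hcentral : commutator H ≤ Subgroup.center H)
    (hcard : Nat.card (commutator H) = p)
    (c : Fin p → H) (hc : ∀ i, c i = a ∨ c i = b)
    (r : ℕ) (hr1 : 1 ≤ r) (hr2 : r ≤ p - 1)
    (hcoset : ∃ z ∈ commutator H, (List.ofFn c).prod = a ^ r * b ^ (p - r) * z)
    (k : ℕ) (hk1 : 1 ≤ k) (hk2 : k ≤ p - 1) :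
    ((List.ofFn c).rotate k).prod ≠ (List.ofFn c).prod := by
  intro hrot
  obtain ⟨y, hy, hw⟩ := hcoset
  have hord := orderOf_commutatorElement_of_closure_pair_eq_top hp hgen hcard
  have hkp : k ≤ (List.ofFn c).length := by rw [List.length_ofFn]; omega
  have hletter : ∀ x ∈ (List.ofFn c).take k, ⁅x, (List.ofFn c).prod⁆ = ⁅a, b⁆⁻¹ ^ r := by
    intro x hx
    obtain ⟨i, rfl⟩ := List.mem_ofFn.mp (List.take_subset _ _ hx)
    rw [hw]
    exact commutatorElement_pow_mul_pow_sub_mul_of_eq_or_eq hcentral (hord ▸ pow_orderOf_eq_one _)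
      (by omega) (hcentral hy) (hc i)
  have hcomm : ⁅((List.ofFn c).take k).prod, (List.ofFn c).prod⁆ = ⁅a, b⁆⁻¹ ^ (r * k) := by
    rw [commutatorElement_list_prod_left_of_forall_eq hcentral hletter, List.length_take,
      min_eq_left hkp, pow_mul]
  have hpr : ¬p ∣ r := Nat.not_dvd_of_pos_of_lt (by omega) (by omega)
  have hpk : ¬p ∣ k := Nat.not_dvd_of_pos_of_lt (by omega) (by omega)
  refine hp.not_dvd_mul hpr hpk ?_
  rw [← hord, ← orderOf_inv, orderOf_dvd_iff_pow_eq_one, ← hcomm,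
    commutatorElement_eq_one_iff_commute]
  exact List.commute_prod_take_of_prod_rotate_eq hkp hrot
end

section
/- Let G be a finite p-group with commutator subgroup G' of order p, where p > 2. Then for every x in the group of normalized units V(𝔽_p G), the p-th power x^p is central in 𝔽_p G. In particular V(𝔽_p G)^p ⊆ ζ(V(𝔽_p G)). -/
open MonoidAlgebra

/-- The augmentation map `𝔽_p G → 𝔽_p`. -/
noncomputable def aug (p : ℕ) [Fact p.Prime] (G : Type*) [Group G] :
    MonoidAlgebra (ZMod p) G →ₐ[ZMod p] ZMod p :=
  MonoidAlgebra.lift (ZMod p) (ZMod p) G 1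

/-- The group `V(𝔽_p G)` of normalized units (units of augmentation `1`). -/
noncomputable def V (p : ℕ) [Fact p.Prime] (G : Type*) [Group G] :
    Subgroup (MonoidAlgebra (ZMod p) G)ˣ :=
  (Units.map (aug p G : MonoidAlgebra (ZMod p) G →* ZMod p)).ker

/-!
Being a normal subgroup of order `p` of a `p`-group, `G'` is central and generated by some `c`
with `c ^ p = 1`. The element `δ = c - 1` of `𝔽_p G` is then central, `δ ^ p = c ^ p - 1 = 0`,
and `δ` divides every ring commutator `ab - ba`, since `gh - hg = (⁅g, h⁆ - 1) hg` for group
elements. So `ad x = L_x - R_x` maps `δ ^ n A` into `δ ^ (n + 1) A`, and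
`(L_x - R_x) ^ p = L_{x ^ p} - R_{x ^ p}` because `L_x` and `R_x` commute in characteristic `p`;
hence `ad (x ^ p)` vanishes.
-/

open scoped commutatorElement

theorem IsPGroup.le_center_of_card_eq_prime {p : ℕ} [hp : Fact p.Prime] {G : Type*} [Group G]
    (hG : IsPGroup p G) {N : Subgroup G} [N.Normal] (hN : Nat.card N = p) :
    N ≤ Subgroup.center G := by
  have : Finite N := Nat.finite_of_card_ne_zero (hN ▸ hp.out.ne_zero)
  have hdvd : p ∣ (MulAction.fixedPoints (ConjAct G) N).ncard := by
    have hmod := (hG.of_equiv ConjAct.toConjAct).card_modEq_card_fixedPoints N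
    rw [hN, Nat.card_coe_set_eq] at hmod
    exact (hmod.dvd_iff dvd_rfl).mp dvd_rfl
  have hfix : MulAction.fixedPoints (ConjAct G) N = Set.univ := by
    refine Set.eq_of_subset_of_ncard_le (Set.subset_univ _) ?_
    rw [Set.ncard_univ, hN]
    exact Nat.le_of_dvd ((Set.ncard_pos).mpr ⟨1, fun g => smul_one g⟩) hdvd
  intro n hn
  have hfixn : (⟨n, hn⟩ : N) ∈ MulAction.fixedPoints (ConjAct G) N := hfix ▸ Set.mem_univ _
  refine Subgroup.mem_center_iff.mpr fun g => ?_
  have hconj := congrArg Subtype.val (hfixn (ConjAct.toConjAct g))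
  rw [ConjAct.Subgroup.val_conj_smul, ConjAct.smul_def, ConjAct.ofConjAct_toConjAct] at hconj
  simpa using congrArg (· * g) hconj

section Commutators

open LinearMap

variable {A : Type*} [Ring A]

theorem LinearMap.mulLeft_sub_mulRight_pow_char (p : ℕ) [Fact p.Prime] {K : Type*} [Field K]
    [CharP K p] [Algebra K A] (x : A) :
    (mulLeft K x - mulRight K x) ^ p = mulLeft K (x ^ p) - mulRight K (x ^ p) := by
  nontriviality A
  have : CharP (Module.End K A) p := charP_of_injective_algebraMap' K p
  rw [sub_pow_char_of_commute p (commute_mulLeft_right x x), pow_mulLeft, pow_mulRight]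

theorem pow_dvd_mulLeft_sub_mulRight_pow_apply {R : Type*} [CommSemiring R] [Algebra R A]
    {δ : A} (hδ : ∀ y, Commute δ y) (hcomm : ∀ a b : A, δ ∣ a * b - b * a) (x y : A)
    (n : ℕ) : δ ^ n ∣ ((mulLeft R x - mulRight R x) ^ n) y := by
  induction n with
  | zero => simp
  | succ n ih =>
    obtain ⟨z, hz⟩ := ih
    have hstep : x * (δ ^ n * z) - δ ^ n * z * x = δ ^ n * (x * z - z * x) := by
      rw [← mul_assoc, ((hδ x).pow_left n).eq.symm, mul_sub, mul_assoc, mul_assoc]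
    rw [pow_succ' (mulLeft R x - mulRight R x), Module.End.mul_apply, hz, LinearMap.sub_apply,
      mulLeft_apply, mulRight_apply, hstep, pow_succ]
    exact mul_dvd_mul_left _ (hcomm x z)

theorem commute_pow_char_of_dvd_mul_sub_mul (p : ℕ) [Fact p.Prime] [CharP A p] {δ : A}
    (hδ : ∀ y, Commute δ y) (hδp : δ ^ p = 0) (hcomm : ∀ a b : A, δ ∣ a * b - b * a)
    (x y : A) : Commute (x ^ p) y := by
  let := ZMod.algebra A p
  have h := pow_dvd_mulLeft_sub_mulRight_pow_apply (R := ZMod p) hδ hcomm x y p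
  rw [mulLeft_sub_mulRight_pow_char p, hδp, zero_dvd_iff, LinearMap.sub_apply, mulLeft_apply,
    mulRight_apply, sub_eq_zero] at h
  exact h

end Commutators

namespace MonoidAlgebra

variable {k G : Type*}

theorem dvd_apply_of_forall_dvd_apply_of [CommSemiring k] [Monoid G] {A : Type*} [Semiring A]
    [Algebra k A] {δ : A} (f : MonoidAlgebra k G →ₗ[k] A) (h : ∀ g, δ ∣ f (of k G g))
    (a : MonoidAlgebra k G) : δ ∣ f a := by
  induction a using MonoidAlgebra.induction_on with
  | of g => exact h g
  | add x y hx hy => rw [map_add]; exact dvd_add hx hy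
  | smul r x hx => rw [map_smul, Algebra.smul_def, Algebra.commutes]; exact hx.mul_right _

theorem of_sub_one_dvd_mul_sub_mul [CommRing k] [Group G] {c : G}
    (hc : ∀ g h : G, ⁅g, h⁆ ∈ Submonoid.powers c) (a b : MonoidAlgebra k G) :
    of k G c - 1 ∣ a * b - b * a := by
  have hof (g h : G) : of k G c - 1 ∣ of k G g * of k G h - of k G h * of k G g := by
    obtain ⟨n, hn : c ^ n = ⁅g, h⁆⟩ := hc g h
    have hgh : g * h = c ^ n * (h * g) := by rw [hn, commutatorElement_def]; group
    refine ⟨(∑ i ∈ Finset.range n, of k G c ^ i) * of k G (h * g), ?_⟩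
    rw [← mul_assoc, mul_geom_sum, sub_mul, one_mul, ← map_pow, ← map_mul, ← map_mul,
      ← map_mul, hgh]
  have hofb (g : G) (b : MonoidAlgebra k G) : of k G c - 1 ∣ of k G g * b - b * of k G g :=
    dvd_apply_of_forall_dvd_apply_of (LinearMap.mulLeft k (of k G g) -
      LinearMap.mulRight k (of k G g)) (hof g) b
  exact dvd_apply_of_forall_dvd_apply_of (LinearMap.mulRight k b - LinearMap.mulLeft k b)
    (hofb · b) a

end MonoidAlgebra

theorem pow_p_central_general (p : ℕ) [Fact p.Prime] (G : Type*) [Group G]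
    (hG : IsPGroup p G) (hG' : Nat.card (commutator G) = p) :
    (∀ x ∈ V p G, ∀ y : MonoidAlgebra (ZMod p) G,
        ((x : (MonoidAlgebra (ZMod p) G)ˣ) : MonoidAlgebra (ZMod p) G) ^ p * y =
          y * ((x : (MonoidAlgebra (ZMod p) G)ˣ) : MonoidAlgebra (ZMod p) G) ^ p) ∧
    (∀ x ∈ V p G, ∀ z ∈ V p G, x ^ p * z = z * x ^ p) := by
  have hcent : commutator G ≤ Subgroup.center G := hG.le_center_of_card_eq_prime hG'
  obtain ⟨c, hc⟩ := (isCyclic_of_prime_card hG').exists_generator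
  have hcp : (c : G) ^ p = 1 := by
    rw [← hG', ← Subgroup.coe_pow, pow_card_eq_one', Subgroup.coe_one]
  have hpowers (g h : G) : ⁅g, h⁆ ∈ Submonoid.powers (c : G) := by
    have hfin : IsOfFinOrder (c : G) :=
      isOfFinOrder_iff_pow_eq_one.mpr ⟨p, (Fact.out : p.Prime).pos, hcp⟩
    rw [hfin.mem_powers_iff_mem_zpowers, ← (commutator G).subtype_apply c,
      ← MonoidHom.map_zpowers]
    exact Subgroup.mem_map_of_mem _ (hc ⟨_, Subgroup.commutator_mem_commutator
      (Subgroup.mem_top g) (Subgroup.mem_top h)⟩)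
  have : CharP (MonoidAlgebra (ZMod p) G) p := charP_of_injective_algebraMap' (ZMod p) p
  have hδ (y : MonoidAlgebra (ZMod p) G) : Commute (of (ZMod p) G c - 1) y :=
    (of_commute (fun g => (Subgroup.mem_center_iff.mp (hcent c.2) g).symm) y).sub_left
      (Commute.one_left y)
  have hδp : (of (ZMod p) G c - 1) ^ p = 0 := by
    rw [sub_pow_char_of_commute p (Commute.one_right _), one_pow, ← map_pow, hcp, map_one,
      sub_self]
  have hring (x y : MonoidAlgebra (ZMod p) G) : Commute (x ^ p) y :=
    commute_pow_char_of_dvd_mul_sub_mul p hδ hδp (of_sub_one_dvd_mul_sub_mul hpowers) x y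
  exact ⟨fun x _ y => (hring x y).eq, fun x _ z _ => Units.ext (by simpa using (hring x z).eq)⟩

/-- For `p > 2` and `G` a finite `p`-group with `|G'| = p`, the `p`-th power of
every normalized unit is central in `𝔽_p G`; in particular
`V(𝔽_p G)^p ⊆ ζ(V(𝔽_p G))`. -/
theorem pow_p_central (p : ℕ) [Fact p.Prime] (hodd : 2 < p) (G : Type*) [Group G]
    [Fintype G] (hG : IsPGroup p G) (hG' : Nat.card (commutator G) = p) :
    (∀ x ∈ V p G, ∀ y : MonoidAlgebra (ZMod p) G,
        ((x : (MonoidAlgebra (ZMod p) G)ˣ) : MonoidAlgebra (ZMod p) G) ^ p * y =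
          y * ((x : (MonoidAlgebra (ZMod p) G)ˣ) : MonoidAlgebra (ZMod p) G) ^ p) ∧
    (∀ x ∈ V p G, ∀ z ∈ V p G, x ^ p * z = z * x ^ p) :=
  pow_p_central_general p G hG hG'
end
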